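/- arXiv:1609.03857 — 2 statements merged into one kernel-verified Lean document; each statement's English description precedes it below -/
import Mathlib

section
/- Let u ∈ MR(I) with u(a) = 0. Then ‖u‖²_{L²(I;H)} ≤ ((b − a)/(2√2)) · ‖u‖²_{MR(I)}. -/
/-!
Testing the fundamental theorem of calculus against `v = u(t)` gives
`‖u(t)‖² = Re ∫ₐᵗ ⟨u'(s), u(t)⟩ ds ≤ ‖u'‖_{L¹(a,t;V')} ‖u(t)‖_V ≤ √(t - a) ‖u'‖_{L²(V')} ‖u(t)‖_V`.
Integrating in `t` and applying Cauchy–Schwarz with `∫ₐᵇ (t - a) dt = (b - a)² / 2` yields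
`‖u‖²_{L²(H)} ≤ (b - a) / √2 · ‖u'‖_{L²(V')} ‖u‖_{L²(V)}`, and `2xy ≤ x² + y²` finishes.
-/

open MeasureTheory Set RCLike

noncomputable section

/-- The antidual `V'` of `V`: continuous conjugate-linear functionals on `V`. -/
abbrev Antidual (𝕜 V : Type*) [RCLike 𝕜] [NormedAddCommGroup V] [NormedSpace 𝕜 V] :
    Type _ :=
  V →SL[starRingEnd 𝕜] 𝕜

/-- `P : H → H` is the orthogonal projection onto the set `C`. -/
def IsOrthProj {H : Type*} [NormedAddCommGroup H] (C : Set H) (P : H → H) : Prop :=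
  ∀ x : H, P x ∈ C ∧ ∀ y ∈ C, ‖x - P x‖ ≤ ‖x - y‖

variable {𝕜 V H : Type*} [RCLike 𝕜]
  [NormedAddCommGroup V] [InnerProductSpace 𝕜 V]
  [NormedAddCommGroup H] [InnerProductSpace 𝕜 H]

/-- `𝔞 ∈ Form([a,b];V,H)`: a bounded (constant `M`) `H`-elliptic (constants `α`, `ω`)
non-autonomous sesquilinear form, relative to the continuous dense embedding `ι : V ↪ H`. -/
structure IsForm (ι : V →L[𝕜] H) (a b : ℝ) (𝔞 : ℝ → V → V → 𝕜) (M α ω : ℝ) : Prop where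
  inj : Function.Injective ι
  denseRange : DenseRange ι
  add_left : ∀ t ∈ Icc a b, ∀ v v' w : V, 𝔞 t (v + v') w = 𝔞 t v w + 𝔞 t v' w
  smul_left : ∀ t ∈ Icc a b, ∀ (c : 𝕜) (v w : V), 𝔞 t (c • v) w = c * 𝔞 t v w
  add_right : ∀ t ∈ Icc a b, ∀ v w w' : V, 𝔞 t v (w + w') = 𝔞 t v w + 𝔞 t v w'
  smul_right : ∀ t ∈ Icc a b, ∀ (c : 𝕜) (v w : V),
    𝔞 t v (c • w) = starRingEnd 𝕜 c * 𝔞 t v w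
  meas : ∀ v w : V, AEStronglyMeasurable (fun t => 𝔞 t v w) (volume.restrict (Icc a b))
  M_nonneg : 0 ≤ M
  bounded : ∀ t ∈ Icc a b, ∀ v w : V, ‖𝔞 t v w‖ ≤ M * ‖v‖ * ‖w‖
  α_pos : 0 < α
  elliptic : ∀ t ∈ Icc a b, ∀ v : V, α * ‖v‖ ^ 2 ≤ re (𝔞 t v v) + ω * ‖v‖ ^ 2

/-- `u ∈ MR([a,b]) = H¹(a,b;V') ∩ L²(a,b;V)`, where `u : ℝ → H` is the continuous
representative, `uV : ℝ → V` the a.e. `V`-valued representative and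
`u' : ℝ → V'` the weak derivative. -/
structure MemMR (ι : V →L[𝕜] H) (a b : ℝ) (u : ℝ → H) (uV : ℝ → V)
    (u' : ℝ → Antidual 𝕜 V) : Prop where
  contOn : ContinuousOn u (Icc a b)
  aeV : ∀ᵐ t ∂(volume.restrict (Icc a b)), ι (uV t) = u t
  memL2V : MemLp uV 2 (volume.restrict (Icc a b))
  memL2D : MemLp u' 2 (volume.restrict (Icc a b))
  ftc : ∀ t ∈ Icc a b, ∀ w : V,
    (inner 𝕜 (ι w) (u t) : 𝕜) = inner 𝕜 (ι w) (u a) + ∫ s in a..t, u' s w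

theorem integral_mul_le_sqrt_mul_sqrt {α : Type*} [MeasurableSpace α] {μ : Measure α}
    {f g : α → ℝ} (hf0 : 0 ≤ᵐ[μ] f) (hg0 : 0 ≤ᵐ[μ] g) (hf : MemLp f 2 μ) (hg : MemLp g 2 μ) :
    ∫ x, f x * g x ∂μ ≤ √(∫ x, f x ^ 2 ∂μ) * √(∫ x, g x ^ 2 ∂μ) := by
  have := integral_mul_le_Lp_mul_Lq_of_nonneg Real.HolderConjugate.two_two hf0 hg0
    (by simpa using hf) (by simpa using hg)
  simp only [Real.rpow_two, one_div] at this
  rwa [Real.sqrt_eq_rpow, Real.sqrt_eq_rpow, one_div]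

theorem intervalIntegral_le_sqrt_mul_sqrt_integral_sq {f : ℝ → ℝ} {a b t : ℝ}
    (hf0 : ∀ s, 0 ≤ f s) (hf : MemLp f 2 (volume.restrict (Icc a b))) (ht : t ∈ Icc a b) :
    ∫ s in a..t, f s ≤ √(t - a) * √(∫ s in a..b, f s ^ 2) := by
  have hft : MemLp f 2 (volume.restrict (Ioc a t)) :=
    hf.mono_measure <|
      Measure.restrict_mono (Ioc_subset_Icc_self.trans (Icc_subset_Icc_right ht.2)) le_rfl
  have hcs := integral_mul_le_sqrt_mul_sqrt (ae_of_all _ fun _ => zero_le_one)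
    (ae_of_all _ hf0) (memLp_const 1) hft
  simp only [one_mul, one_pow, integral_const, smul_eq_mul, mul_one,
    measureReal_restrict_apply_univ, Real.volume_real_Ioc_of_le ht.1] at hcs
  rw [intervalIntegral.integral_of_le ht.1]
  refine hcs.trans (mul_le_mul_of_nonneg_left (Real.sqrt_le_sqrt ?_) (Real.sqrt_nonneg _))
  rw [← intervalIntegral.integral_of_le ht.1]
  exact intervalIntegral.integral_mono_interval le_rfl ht.1 ht.2
    (ae_of_all _ fun s => sq_nonneg (f s))
    ((intervalIntegrable_iff_integrableOn_Icc_of_le (ht.1.trans ht.2)).2 hf.integrable_sq)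

theorem memLp_sqrt_sub_const (a b c : ℝ) {p : ENNReal} :
    MemLp (fun t => √(t - c)) p (volume.restrict (Icc a b)) := by
  have hmono : Monotone fun t : ℝ => √(t - c) := fun _ _ h =>
    Real.sqrt_le_sqrt (sub_le_sub_right h c)
  exact (hmono.monotoneOn _).memLp_isCompact isCompact_Icc

theorem integral_Icc_sqrt_sub_sq {a b : ℝ} (hab : a ≤ b) :
    ∫ t in Icc a b, √(t - a) ^ 2 = (b - a) ^ 2 / 2 := by
  rw [setIntegral_congr_fun measurableSet_Icc fun t ht => Real.sq_sqrt (sub_nonneg.2 ht.1),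
    integral_Icc_eq_integral_Ioc, ← intervalIntegral.integral_of_le hab,
    intervalIntegral.integral_comp_sub_right fun t => t, integral_id]
  ring

theorem intervalIntegral_sqrt_sub_mul_le {g : ℝ → ℝ} {a b : ℝ} (hab : a ≤ b)
    (hg0 : ∀ t, 0 ≤ g t) (hg : MemLp g 2 (volume.restrict (Icc a b))) :
    ∫ t in a..b, √(t - a) * g t ≤ (b - a) / √2 * √(∫ t in a..b, g t ^ 2) := by
  have hcs := integral_mul_le_sqrt_mul_sqrt (ae_of_all _ fun t => Real.sqrt_nonneg (t - a))
    (ae_of_all _ hg0) (memLp_sqrt_sub_const a b a) hg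
  simp only [intervalIntegral.integral_of_le hab, ← integral_Icc_eq_integral_Ioc]
  rwa [integral_Icc_sqrt_sub_sq hab, Real.sqrt_div' _ zero_le_two,
    Real.sqrt_sq (sub_nonneg.2 hab)] at hcs

theorem norm_intervalIntegral_apply_le {𝕜 𝕜₂ E F : Type*} [NontriviallyNormedField 𝕜]
    [NontriviallyNormedField 𝕜₂] {σ : 𝕜 →+* 𝕜₂} [RingHomIsometric σ]
    [NormedAddCommGroup E] [NormedSpace 𝕜 E] [NormedAddCommGroup F] [NormedSpace 𝕜₂ F]
    [NormedSpace ℝ F] {φ : ℝ → E →SL[σ] F} {a t : ℝ} (hat : a ≤ t)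
    (hφ : IntervalIntegrable (fun s => ‖φ s‖) volume a t) (v : E) :
    ‖∫ s in a..t, φ s v‖ ≤ (∫ s in a..t, ‖φ s‖) * ‖v‖ := by
  rw [← intervalIntegral.integral_mul_const]
  exact intervalIntegral.norm_integral_le_of_norm_le hat
    (ae_of_all _ fun s _ => (φ s).le_opNorm v) (hφ.mul_const _)

theorem MemMR.ae_norm_sq_le_integral_norm_deriv_mul {ι : V →L[𝕜] H} {a b : ℝ} {u : ℝ → H}
    {uV : ℝ → V} {u' : ℝ → Antidual 𝕜 V} (hu : MemMR ι a b u uV u') (hza : u a = 0) :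
    ∀ᵐ t ∂volume.restrict (Icc a b), ‖u t‖ ^ 2 ≤ (∫ s in a..t, ‖u' s‖) * ‖uV t‖ := by
  filter_upwards [hu.aeV, ae_restrict_mem measurableSet_Icc] with t hιt ht
  have hint : IntervalIntegrable (fun s => ‖u' s‖) volume a t :=
    (intervalIntegrable_iff_integrableOn_Icc_of_le ht.1).2
      (IntegrableOn.mono_set (hu.memL2D.integrable one_le_two).norm (Icc_subset_Icc_right ht.2))
  have hftc : inner 𝕜 (u t) (u t) = ∫ s in a..t, u' s (uV t) := by
    simpa [hιt, hza] using hu.ftc t ht (uV t)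
  calc ‖u t‖ ^ 2 = re (inner 𝕜 (u t) (u t)) := (inner_self_eq_norm_sq _).symm
    _ ≤ ‖∫ s in a..t, u' s (uV t)‖ := hftc ▸ re_le_norm _
    _ ≤ (∫ s in a..t, ‖u' s‖) * ‖uV t‖ := norm_intervalIntegral_apply_le ht.1 hint (uV t)

theorem MemMR.ae_norm_sq_le_sqrt_integral_mul {ι : V →L[𝕜] H} {a b : ℝ} {u : ℝ → H}
    {uV : ℝ → V} {u' : ℝ → Antidual 𝕜 V} (hu : MemMR ι a b u uV u') (hza : u a = 0) :
    ∀ᵐ t ∂volume.restrict (Icc a b),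
      ‖u t‖ ^ 2 ≤ √(∫ s in a..b, ‖u' s‖ ^ 2) * (√(t - a) * ‖uV t‖) := by
  filter_upwards [hu.ae_norm_sq_le_integral_norm_deriv_mul hza, ae_restrict_mem measurableSet_Icc]
    with t hut ht
  calc ‖u t‖ ^ 2 ≤ (∫ s in a..t, ‖u' s‖) * ‖uV t‖ := hut
    _ ≤ (√(t - a) * √(∫ s in a..b, ‖u' s‖ ^ 2)) * ‖uV t‖ := by
      gcongr
      exact intervalIntegral_le_sqrt_mul_sqrt_integral_sq (fun s => norm_nonneg _) hu.memL2D.norm ht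
    _ = √(∫ s in a..b, ‖u' s‖ ^ 2) * (√(t - a) * ‖uV t‖) := by ring

theorem L2H_norm_le_MR_norm_general
    {𝕜 V H : Type*} [RCLike 𝕜]
    [NormedAddCommGroup V] [InnerProductSpace 𝕜 V]
    [NormedAddCommGroup H] [InnerProductSpace 𝕜 H]
    (ι : V →L[𝕜] H) (a b : ℝ) (hab : a < b)
    (u : ℝ → H) (uV : ℝ → V) (u' : ℝ → Antidual 𝕜 V)
    (hu : MemMR ι a b u uV u') (hza : u a = 0) :
    (∫ s in a..b, ‖u s‖ ^ 2) ≤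
      (b - a) / (2 * Real.sqrt 2) *
        ((∫ s in a..b, ‖u' s‖ ^ 2) + ∫ s in a..b, ‖uV s‖ ^ 2) := by
  set F := ∫ s in a..b, ‖u' s‖ ^ 2
  set G := ∫ s in a..b, ‖uV s‖ ^ 2
  have huV2 := hu.memL2V.norm
  have hamgm : 2 * √F * √G ≤ F + G := by
    have hsq := two_mul_le_add_sq √F √G
    rwa [Real.sq_sqrt (intervalIntegral.integral_nonneg hab.le fun _ _ => sq_nonneg _),
      Real.sq_sqrt (intervalIntegral.integral_nonneg hab.le fun _ _ => sq_nonneg _)] at hsq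
  calc ∫ s in a..b, ‖u s‖ ^ 2 ≤ ∫ t in a..b, √F * (√(t - a) * ‖uV t‖) :=
        intervalIntegral.integral_mono_ae_restrict hab.le
          ((hu.contOn.norm.pow 2).intervalIntegrable_of_Icc hab.le)
          ((intervalIntegrable_iff_integrableOn_Icc_of_le hab.le).2
            (((memLp_sqrt_sub_const a b a (p := 2)).integrable_mul huV2).const_mul _))
          (hu.ae_norm_sq_le_sqrt_integral_mul hza)
    _ = √F * ∫ t in a..b, √(t - a) * ‖uV t‖ := intervalIntegral.integral_const_mul _ _
    _ ≤ √F * ((b - a) / √2 * √G) := by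
        gcongr
        exact intervalIntegral_sqrt_sub_mul_le hab.le (fun _ => norm_nonneg _) huV2
    _ = (b - a) / √2 * (√F * √G) := by ring
    _ ≤ (b - a) / √2 * ((F + G) / 2) :=
        mul_le_mul_of_nonneg_left (by linarith)
          (div_nonneg (sub_nonneg.2 hab.le) (Real.sqrt_nonneg 2))
    _ = (b - a) / (2 * √2) * (F + G) := by ring

/-- **Lemma 5.2.** For `u ∈ MR(I)` with `u(a) = 0` one has
`‖u‖²_{L²(I;H)} ≤ ((b − a)/(2√2)) ‖u‖²_{MR(I)}`. -/
theorem L2H_norm_le_MR_norm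
    {𝕜 V H : Type*} [RCLike 𝕜]
    [NormedAddCommGroup V] [InnerProductSpace 𝕜 V] [CompleteSpace V]
    [NormedAddCommGroup H] [InnerProductSpace 𝕜 H] [CompleteSpace H]
    (ι : V →L[𝕜] H) (a b : ℝ) (hab : a < b)
    (hinj : Function.Injective ι) (hdense : DenseRange ι)
    (u : ℝ → H) (uV : ℝ → V) (u' : ℝ → Antidual 𝕜 V)
    (hu : MemMR ι a b u uV u') (hza : u a = 0) :
    (∫ s in a..b, ‖u s‖ ^ 2) ≤
      (b - a) / (2 * Real.sqrt 2) *
        ((∫ s in a..b, ‖u' s‖ ^ 2) + ∫ s in a..b, ‖uV s‖ ^ 2) :=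
  L2H_norm_le_MR_norm_general ι a b hab u uV u' hu hza
end
end

section
/- Let Ω ⊆ ℝ^d be a measurable set with finite measure, H = L²(Ω;ℝ), C := {g ∈ H : 0 ≤ g ≤ 1 a.e.}, and P : H → H the orthogonal projection onto C. Let F : ℝ → ℝ be locally Lipschitz with F(0) = F(1) = 0. Then for every g ∈ H the function F ∘ (Pg) belongs to H and (F(Pg) | g − Pg)_H = 0, i.e. ∫_Ω F(Pg(x)) · (g(x) − Pg(x)) dx = 0. -/
/-! `F ∘ P` vanishes wherever `P` moves a point (it lands on `0` or `1`), and `P` is the identity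
elsewhere; so the integrand `F(Pg)(g - Pg)` vanishes identically. `F(Pg)` lies in `L²` because
`F ∘ P` is globally Lipschitz and fixes `0`. -/

open MeasureTheory Set

noncomputable section

lemma clamp_lipschitz : LipschitzWith 1 (fun r : ℝ => max (min r 1) 0) :=
  (LipschitzWith.id.min_const 1).max_const 0

/-- The pointwise clamping map on `L²(Ω)`, i.e. the orthogonal projection onto
`C = {g : 0 ≤ g ≤ 1 a.e.}`. -/
def clampLp {d : ℕ} (Ω : Set (Fin d → ℝ)) :
    Lp ℝ 2 (volume.restrict Ω) → Lp ℝ 2 (volume.restrict Ω) :=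
  clamp_lipschitz.compLp (by simp)

lemma max_min_mem_Icc {a b : ℝ} (hab : a ≤ b) (r : ℝ) : max (min r b) a ∈ Icc a b :=
  ⟨le_max_right _ _, max_le (min_le_right _ _) hab⟩

lemma apply_max_min_mul_sub_eq_zero {a b : ℝ} (hab : a ≤ b) {F : ℝ → ℝ} (ha : F a = 0)
    (hb : F b = 0) (r : ℝ) : F (max (min r b) a) * (r - max (min r b) a) = 0 := by
  rcases le_or_gt r a with hra | har
  · rw [min_eq_left (hra.trans hab), max_eq_right hra, ha, zero_mul]
  rcases le_or_gt b r with hbr | hrb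
  · rw [min_eq_right hbr, max_eq_left hab, hb, zero_mul]
  · rw [min_eq_left hrb.le, max_eq_left har.le, sub_self, mul_zero]

lemma LipschitzOnWith.lipschitzWith_comp_clamp {F : ℝ → ℝ} {L : NNReal}
    (hF : LipschitzOnWith L F (Icc 0 1)) : LipschitzWith L (fun r => F (max (min r 1) 0)) := by
  simpa [Function.comp_def] using lipschitzOnWith_univ.mp
    (hF.comp clamp_lipschitz.lipschitzOnWith fun r _ => max_min_mem_Icc zero_le_one r)

theorem orthogonality_semilinear_term_general {d : ℕ} (Ω : Set (Fin d → ℝ))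
    (F : ℝ → ℝ)
    (hF : ∀ s : Set ℝ, Bornology.IsBounded s → ∃ L : NNReal, LipschitzOnWith L F s)
    (hF0 : F 0 = 0) (hF1 : F 1 = 0)
    (g : Lp ℝ 2 (volume.restrict Ω)) :
    MemLp (fun x => F (clampLp Ω g x)) 2 (volume.restrict Ω) ∧
    ∫ x, F (clampLp Ω g x) * (g x - clampLp Ω g x) ∂(volume.restrict Ω) = 0 := by
  obtain ⟨L, hL⟩ := hF (Icc 0 1) (Metric.isBounded_Icc 0 1)
  have hclamp : clampLp Ω g =ᵐ[volume.restrict Ω] fun x => max (min (g x) 1) 0 :=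
    clamp_lipschitz.coeFn_compLp _ g
  refine ⟨?_, integral_eq_zero_of_ae ?_⟩
  · exact (hL.lipschitzWith_comp_clamp.comp_memLp (by simpa using hF0) (Lp.memLp g)).ae_eq
      (hclamp.fun_comp F).symm
  · filter_upwards [hclamp] with x hx
    rw [hx]
    exact apply_max_min_mul_sub_eq_zero zero_le_one hF0 hF1 (g x)

/-- If `F : ℝ → ℝ` is locally Lipschitz with `F(0) = F(1) = 0`, then for every
`g ∈ L²(Ω)` the composition `F ∘ Pg` is in `L²(Ω)` and `(F(Pg) | g − Pg)_{L²} = 0`,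
i.e. `∫_Ω F(Pg(x))(g(x) − Pg(x)) dx = 0`. -/
theorem orthogonality_semilinear_term {d : ℕ} (Ω : Set (Fin d → ℝ))
    (hΩ : MeasurableSet Ω) (hfin : volume Ω < ⊤)
    (F : ℝ → ℝ)
    (hF : ∀ s : Set ℝ, Bornology.IsBounded s → ∃ L : NNReal, LipschitzOnWith L F s)
    (hF0 : F 0 = 0) (hF1 : F 1 = 0)
    (g : Lp ℝ 2 (volume.restrict Ω)) :
    MemLp (fun x => F (clampLp Ω g x)) 2 (volume.restrict Ω) ∧
    ∫ x, F (clampLp Ω g x) * (g x - clampLp Ω g x) ∂(volume.restrict Ω) = 0 :=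
  orthogonality_semilinear_term_general Ω F hF hF0 hF1 g

end
end
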